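/- arXiv:1901.02727 — 3 statements merged into one kernel-verified Lean document; each statement's English description precedes it below -/
import Mathlib

section
/- For every real number β > 0, the improper integral ∫₀^∞ (4πs)^{-1/2} · exp(−β²/(4s) − s) ds converges and equals e^{−β}/2. -/
/-!
Substituting `s = t²` and completing the square, `β² / (4t²) + t² = (t - c/t)² + β` with
`c = β / 2`, turns the integral into `e^{-β} / √π · ∫₀^∞ exp (-(t - c/t)²) dt`. By the
Cauchy–Schlömilch transformation this last integral is half of the Gaussian integral `√π`:
`u = t - c/t` maps `(0, ∞)` bijectively onto `ℝ` with Jacobian `1 + c/t²`, and the involution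
`t ↦ c/t` sends `t - c/t` to its negative, so it identifies the integral of `c/t² · f (t - c/t)`
with that of `f (t - c/t)` for even `f`.
-/

open MeasureTheory Real Set

section CauchySchlomilch

variable {E : Type*} [NormedAddCommGroup E] [NormedSpace ℝ E] {c : ℝ}

theorem bijOn_const_div_Ioi (hc : 0 < c) : BijOn (fun t : ℝ => c / t) (Ioi 0) (Ioi 0) :=
  InvOn.bijOn ⟨fun _ _ => div_div_cancel₀ hc.ne', fun _ _ => div_div_cancel₀ hc.ne'⟩
    (fun _ ht => div_pos hc ht) (fun _ ht => div_pos hc ht)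

theorem strictMonoOn_sub_const_div (hc : 0 < c) : StrictMonoOn (fun t : ℝ => t - c / t) (Ioi 0) :=
  fun _ ha _ _ hab => sub_lt_sub hab (div_lt_div_of_pos_left hc ha hab)

theorem image_sub_const_div_Ioi (hc : 0 < c) : (fun t : ℝ => t - c / t) '' Ioi 0 = univ := by
  refine eq_univ_of_forall fun u => ?_
  -- the positive root of `t ^ 2 - u * t - c`
  set d := √(u ^ 2 + 4 * c)
  have hd : d ^ 2 = u ^ 2 + 4 * c := sq_sqrt (by positivity)
  have hud : 0 < u + d := by nlinarith [sqrt_nonneg (u ^ 2 + 4 * c)]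
  refine ⟨(u + d) / 2, half_pos hud, ?_⟩
  field_simp
  nlinarith

theorem hasDerivAt_const_div (c : ℝ) {t : ℝ} (ht : t ≠ 0) :
    HasDerivAt (fun t : ℝ => c / t) (-(c / t ^ 2)) t := by
  simpa [div_eq_mul_inv] using (hasDerivAt_inv ht).const_mul c

theorem hasDerivAt_sub_const_div (c : ℝ) {t : ℝ} (ht : t ≠ 0) :
    HasDerivAt (fun t : ℝ => t - c / t) (1 + c / t ^ 2) t := by
  simpa using (hasDerivAt_id' t).fun_sub (hasDerivAt_const_div c ht)

theorem integrableOn_comp_sub_const_div_Ioi (hc : 0 < c) {f : ℝ → E} (hf : Integrable f) :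
    IntegrableOn (fun t => f (t - c / t)) (Ioi 0) := by
  have hJ : IntegrableOn (fun t => |1 + c / t ^ 2| • f (t - c / t)) (Ioi 0) := by
    rw [← integrableOn_image_iff_integrableOn_abs_deriv_smul measurableSet_Ioi
      (fun t ht => (hasDerivAt_sub_const_div c (ne_of_gt ht)).hasDerivWithinAt)
      (strictMonoOn_sub_const_div hc).injOn, image_sub_const_div_Ioi hc]
    exact hf.integrableOn
  have hbound : ∀ t : ℝ, 1 ≤ |1 + c / t ^ 2| := fun t => by
    rw [abs_of_pos (by positivity)]
    linarith [div_nonneg hc.le (sq_nonneg t)]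
  refine (hJ.bdd_smul (φ := fun t => |1 + c / t ^ 2|⁻¹) 1
    (Measurable.aestronglyMeasurable (by fun_prop))
    (.of_forall fun t => ?_)).congr (.of_forall fun t => ?_)
  · simpa using inv_le_one_of_one_le₀ (hbound t)
  · exact inv_smul_smul₀ (by linarith [hbound t]) _

theorem integral_comp_sub_const_div_Ioi (hc : 0 < c) {f : ℝ → E} (hf : Integrable f)
    (heven : ∀ u, f (-u) = f u) :
    ∫ t in Ioi 0, f (t - c / t) = (2 : ℝ)⁻¹ • ∫ u, f u := by
  have hJ : ∫ u, f u = ∫ t in Ioi 0, (1 + c / t ^ 2) • f (t - c / t) := by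
    rw [← setIntegral_univ, ← image_sub_const_div_Ioi hc, integral_image_eq_integral_abs_deriv_smul
      measurableSet_Ioi (fun t ht => (hasDerivAt_sub_const_div c (ne_of_gt ht)).hasDerivWithinAt)
      (strictMonoOn_sub_const_div hc).injOn]
    exact setIntegral_congr_fun measurableSet_Ioi fun t _ => by rw [abs_of_pos (by positivity)]
  have hinv : ∀ t ∈ Ioi (0 : ℝ),
      |-(c / t ^ 2)| • f (c / t - c / (c / t)) = (c / t ^ 2) • f (t - c / t) := fun t _ => by
    rw [abs_neg, abs_of_nonneg (by positivity), div_div_cancel₀ hc.ne', ← heven, neg_sub]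
  have hψ : ∀ t ∈ Ioi (0 : ℝ), HasDerivWithinAt (fun t => c / t) (-(c / t ^ 2)) (Ioi 0) t :=
    fun t ht => (hasDerivAt_const_div c (ne_of_gt ht)).hasDerivWithinAt
  have hF := integrableOn_comp_sub_const_div_Ioi hc hf
  have hrest : IntegrableOn (fun t => (c / t ^ 2) • f (t - c / t)) (Ioi 0) := by
    refine IntegrableOn.congr_fun ?_ hinv measurableSet_Ioi
    refine (integrableOn_image_iff_integrableOn_abs_deriv_smul measurableSet_Ioi hψ
      (bijOn_const_div_Ioi hc).injOn (fun t => f (t - c / t))).mp ?_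
    rwa [(bijOn_const_div_Ioi hc).image_eq]
  have hswap : ∫ t in Ioi 0, (c / t ^ 2) • f (t - c / t) = ∫ t in Ioi 0, f (t - c / t) := by
    conv_rhs => rw [← (bijOn_const_div_Ioi hc).image_eq]
    rw [integral_image_eq_integral_abs_deriv_smul measurableSet_Ioi hψ
      (bijOn_const_div_Ioi hc).injOn]
    exact (setIntegral_congr_fun measurableSet_Ioi hinv).symm
  simp only [hJ, add_smul, one_smul]
  rw [integral_add hF hrest, hswap, ← two_smul ℝ, smul_smul, inv_mul_cancel₀ two_ne_zero, one_smul]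

theorem integrable_exp_neg_sq : Integrable fun u : ℝ => exp (-u ^ 2) := by
  simpa using integrable_exp_neg_mul_sq one_pos

theorem integrableOn_exp_neg_sub_const_div_sq (hc : 0 < c) :
    IntegrableOn (fun t => exp (-(t - c / t) ^ 2)) (Ioi 0) :=
  integrableOn_comp_sub_const_div_Ioi hc integrable_exp_neg_sq

theorem integral_exp_neg_sub_const_div_sq (hc : 0 < c) :
    ∫ t in Ioi 0, exp (-(t - c / t) ^ 2) = √π / 2 := by
  have hgauss : ∫ u : ℝ, exp (-u ^ 2) = √π := by simpa using integral_gaussian 1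
  rw [integral_comp_sub_const_div_Ioi hc integrable_exp_neg_sq (fun u => by rw [neg_sq]),
    smul_eq_mul, hgauss, inv_mul_eq_div]

end CauchySchlomilch

theorem rpow_two_subst_heat_integrand_eq {β t : ℝ} (ht : 0 < t) :
    (|(2 : ℝ)| * t ^ ((2 : ℝ) - 1)) •
        ((√(4 * π * t ^ (2 : ℝ)))⁻¹ * exp (-(β ^ 2 / (4 * t ^ (2 : ℝ))) - t ^ (2 : ℝ))) =
      (√π)⁻¹ * exp (-β) * exp (-(t - β / 2 / t) ^ 2) := by
  have hsqrt : √(4 * π * t ^ 2) = 2 * √π * t := by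
    rw [show 4 * π * t ^ 2 = (2 * √π * t) ^ 2 by rw [mul_pow, mul_pow, sq_sqrt pi_pos.le]; ring]
    exact sqrt_sq (by positivity)
  have hexp : -(β ^ 2 / (4 * t ^ 2)) - t ^ 2 = -β + -(t - β / 2 / t) ^ 2 := by
    field_simp
    ring
  norm_num [rpow_natCast, hsqrt, hexp, exp_add]
  field_simp

/-- For every real β > 0, the integral ∫₀^∞ (4πs)^{-1/2} exp(−β²/(4s) − s) ds
converges and equals e^{−β}/2. -/
theorem stmt0 (β : ℝ) (hβ : 0 < β) :
    IntegrableOn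
      (fun s : ℝ => (Real.sqrt (4 * Real.pi * s))⁻¹ * Real.exp (-(β ^ 2 / (4 * s)) - s))
      (Set.Ioi 0) ∧
    ∫ s in Set.Ioi (0 : ℝ),
        (Real.sqrt (4 * Real.pi * s))⁻¹ * Real.exp (-(β ^ 2 / (4 * s)) - s)
      = Real.exp (-β) / 2 := by
  have hc : 0 < β / 2 := half_pos hβ
  have hsubst := fun t (ht : t ∈ Ioi (0 : ℝ)) => rpow_two_subst_heat_integrand_eq (β := β) ht
  constructor
  · rw [← integrableOn_Ioi_comp_rpow_iff _ two_ne_zero]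
    exact IntegrableOn.congr_fun ((integrableOn_exp_neg_sub_const_div_sq hc).const_mul _)
      (fun t ht => (hsubst t ht).symm) measurableSet_Ioi
  · rw [← integral_comp_rpow_Ioi _ two_ne_zero, setIntegral_congr_fun measurableSet_Ioi hsubst,
      integral_const_mul, integral_exp_neg_sub_const_div_sq hc]
    field_simp
end

section
/- Let a > 0, λ > 0, τ ≥ 0, and define κ*_τ = sup{ κ ∈ (0, √a) : λ₁^{c_κ} − κ ≥ 0 }. Then: if τ ≥ 1, or if τ < 1 and a(1−τ) ≤ λ + τa, then κ*_τ = √a; and if τ < 1 and a(1−τ) > λ + τa, then κ*_τ = √((λ + τa)/(1 − τ)). Equivalently, κ*_τ = min{ √a, √((λ+τa)/(1−τ)_+) } with the convention that the second entry is +∞ when (1−τ)_+ = 0. -/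
open Real Set Filter

/-- λ₁^c = (τc + √(4λ+τ²c²))/2 -/
noncomputable def lam1 (lam τ c : ℝ) : ℝ := (τ * c + Real.sqrt (4 * lam + τ ^ 2 * c ^ 2)) / 2

/-- λ₂^c = (√(4λ+τ²c²) − τc)/2 -/
noncomputable def lam2 (lam τ c : ℝ) : ℝ := (Real.sqrt (4 * lam + τ ^ 2 * c ^ 2) - τ * c) / 2

/-- c_κ = κ + a/κ -/
noncomputable def cKappa (a κ : ℝ) : ℝ := κ + a / κ

/-- The set whose supremum defines b*_τ. -/
noncomputable def bStarSet (a lam τ : ℝ) : Set ℝ :=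
  {y : ℝ | ∃ κ ∈ Set.Ioo 0 (Real.sqrt a),
    y = 1 + lam2 lam τ (cKappa a κ) * max (κ - lam2 lam τ (cKappa a κ)) 0 /
          ((lam1 lam τ (cKappa a κ) + lam2 lam τ (cKappa a κ)) * (κ + lam2 lam τ (cKappa a κ)))}

/-- b*_τ -/
noncomputable def bStar (a lam τ : ℝ) : ℝ := sSup (bStarSet a lam τ)

/-- κ*_τ = sup{ κ ∈ (0,√a) : λ₁^{c_κ} − κ ≥ 0 } -/
noncomputable def kappaStar (a lam τ : ℝ) : ℝ :=
  sSup {κ : ℝ | κ ∈ Set.Ioo 0 (Real.sqrt a) ∧ 0 ≤ lam1 lam τ (cKappa a κ) - κ}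

lemma stmt10_mem_iff (a lam τ κ : ℝ) (ha : 0 < a) (hlam : 0 < lam) (hτ : 0 ≤ τ) (hκ : 0 < κ) :
    0 ≤ lam1 lam τ (cKappa a κ) - κ ↔ (1 - τ) * κ ^ 2 ≤ lam + τ * a := by
  have hc : cKappa a κ = κ + a / κ := rfl
  have hkc : κ * cKappa a κ = κ ^ 2 + a := by rw [hc]; field_simp
  set c := cKappa a κ with hcdef
  have hcpos : 0 < c := by rw [hc]; positivity
  set S := Real.sqrt (4 * lam + τ ^ 2 * c ^ 2) with hS
  have hSnn : 0 ≤ S := Real.sqrt_nonneg _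
  have hSsq : S ^ 2 = 4 * lam + τ ^ 2 * c ^ 2 := Real.sq_sqrt (by positivity)
  unfold lam1
  rw [← hS]
  constructor
  · intro h
    have h2 : 2 * κ - τ * c ≤ S := by linarith
    rcases le_or_gt (2 * κ) (τ * c) with h3 | h3
    · nlinarith
    · nlinarith [sq_nonneg (2 * κ - τ * c)]
  · intro h
    have key : κ ^ 2 ≤ lam + τ * (κ * c) := by rw [hkc]; nlinarith
    rcases le_or_gt (2 * κ - τ * c) 0 with h3 | h3
    · linarith
    · have hsq : (2 * κ - τ * c) ^ 2 ≤ 4 * lam + τ ^ 2 * c ^ 2 := by nlinarith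
      have := (Real.le_sqrt h3.le (by positivity)).mpr hsq
      rw [← hS] at this
      linarith

theorem stmt10 (a lam τ : ℝ) (ha : 0 < a) (hlam : 0 < lam) (hτ : 0 ≤ τ) :
    ((1 ≤ τ ∨ (τ < 1 ∧ a * (1 - τ) ≤ lam + τ * a)) → kappaStar a lam τ = Real.sqrt a) ∧
    ((τ < 1 ∧ lam + τ * a < a * (1 - τ)) →
      kappaStar a lam τ = Real.sqrt ((lam + τ * a) / (1 - τ))) := by
  have hsa : 0 < Real.sqrt a := Real.sqrt_pos.mpr ha
  have hsaq : Real.sqrt a ^ 2 = a := Real.sq_sqrt ha.le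
  have hset : {κ : ℝ | κ ∈ Set.Ioo 0 (Real.sqrt a) ∧ 0 ≤ lam1 lam τ (cKappa a κ) - κ}
      = {κ : ℝ | κ ∈ Set.Ioo 0 (Real.sqrt a) ∧ (1 - τ) * κ ^ 2 ≤ lam + τ * a} := by
    ext κ
    simp only [mem_setOf_eq, mem_Ioo]
    constructor
    · rintro ⟨h1, h2⟩; exact ⟨h1, (stmt10_mem_iff a lam τ κ ha hlam hτ h1.1).mp h2⟩
    · rintro ⟨h1, h2⟩; exact ⟨h1, (stmt10_mem_iff a lam τ κ ha hlam hτ h1.1).mpr h2⟩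
  constructor
  · intro hcase
    have hall : ∀ κ ∈ Set.Ioo (0:ℝ) (Real.sqrt a), (1 - τ) * κ ^ 2 ≤ lam + τ * a := by
      intro κ hκ
      rcases hcase with h | ⟨h1, h2⟩
      · nlinarith [sq_nonneg κ, hκ.1]
      · have : κ ^ 2 < a := by nlinarith [hκ.1, hκ.2, hsaq]
        nlinarith
    have : {κ : ℝ | κ ∈ Set.Ioo 0 (Real.sqrt a) ∧ 0 ≤ lam1 lam τ (cKappa a κ) - κ}
        = Set.Ioo 0 (Real.sqrt a) := by
      rw [hset]; ext κ; simp only [mem_setOf_eq, mem_Ioo]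
      exact ⟨fun h => h.1, fun h => ⟨h, hall κ h⟩⟩
    rw [kappaStar, this, csSup_Ioo hsa]
  · rintro ⟨h1, h2⟩
    have h1' : 0 < 1 - τ := by linarith
    have hnum : 0 < lam + τ * a := by positivity
    set m := Real.sqrt ((lam + τ * a) / (1 - τ)) with hm
    have hmpos : 0 < m := Real.sqrt_pos.mpr (by positivity)
    have hmsq : m ^ 2 = (lam + τ * a) / (1 - τ) := Real.sq_sqrt (by positivity)
    have hmlt : m < Real.sqrt a := by
      apply Real.sqrt_lt_sqrt (by positivity)
      rw [div_lt_iff₀ h1']; nlinarith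
    have : {κ : ℝ | κ ∈ Set.Ioo 0 (Real.sqrt a) ∧ 0 ≤ lam1 lam τ (cKappa a κ) - κ}
        = Set.Ioc 0 m := by
      rw [hset]; ext κ; simp only [mem_setOf_eq, mem_Ioo, mem_Ioc]
      constructor
      · rintro ⟨⟨hκ0, _⟩, hκ2⟩
        refine ⟨hκ0, ?_⟩
        have : κ ^ 2 ≤ (lam + τ * a) / (1 - τ) := by rw [le_div_iff₀ h1']; nlinarith
        nlinarith [hmsq, hmpos]
      · rintro ⟨hκ0, hκm⟩
        have hκ2 : κ ^ 2 ≤ m ^ 2 := by nlinarith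
        rw [hmsq] at hκ2
        rw [le_div_iff₀ h1'] at hκ2
        exact ⟨⟨hκ0, lt_of_le_of_lt hκm hmlt⟩, by nlinarith⟩
    rw [kappaStar, this, csSup_Ioc hmpos]
end

section
/- Let a > 0, λ > 0, and let τ ≥ (1/2)(1 − λ/a)_+. Then κ*_τ = √a and c*(τ) = 2√a, where κ*_τ = sup{ κ ∈ (0, √a) : λ₁^{c_κ} − κ ≥ 0 } and c*(τ) = κ*_τ + a/κ*_τ. -/
open Real Set Filter

theorem stmt11 (a lam τ : ℝ) (ha : 0 < a) (hlam : 0 < lam)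
    (hτ : (1 / 2) * max (1 - lam / a) 0 ≤ τ) :
    kappaStar a lam τ = Real.sqrt a ∧
    kappaStar a lam τ + a / kappaStar a lam τ = 2 * Real.sqrt a := by
  have hτ0 : 0 ≤ τ := le_trans (by positivity) hτ
  have h2τa : a - lam ≤ 2 * τ * a := by
    rcases le_or_gt (1 - lam / a) 0 with h | h
    · have : a ≤ lam := by
        have h1 : 1 ≤ lam / a := by linarith
        have := (le_div_iff₀ ha).mp h1
        linarith
      nlinarith [mul_nonneg hτ0 ha.le]
    · have h1 : (1 / 2) * (1 - lam / a) ≤ τ := by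
        have := hτ; rwa [max_eq_left h.le] at this
      have : (1 - lam / a) * a = a - lam := by field_simp
      nlinarith
  have key : ∀ κ, κ ∈ Set.Ioo 0 (Real.sqrt a) → 0 ≤ lam1 lam τ (cKappa a κ) - κ := by
    intro κ ⟨hκ0, hκa⟩
    have hκa2 : κ ^ 2 ≤ a := by
      nlinarith [Real.sq_sqrt ha.le, Real.sqrt_nonneg a]
    have hE : κ ^ 2 ≤ lam + τ * κ ^ 2 + τ * a := by
      nlinarith [mul_nonneg hτ0 (sub_nonneg.mpr hκa2),
        mul_nonneg (sub_nonneg.mpr h2τa) (sq_nonneg κ),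
        mul_nonneg hlam.le (sub_nonneg.mpr hκa2)]
    have hκne : κ ≠ 0 := ne_of_gt hκ0
    have hc : τ * cKappa a κ * κ = τ * (κ ^ 2 + a) := by
      unfold cKappa
      linear_combination τ * div_mul_cancel₀ a hκne
    have hsq : (2 * κ - τ * cKappa a κ) ^ 2 ≤ 4 * lam + τ ^ 2 * (cKappa a κ) ^ 2 := by
      nlinarith [hE, hc]
    have hle : 2 * κ - τ * cKappa a κ ≤ Real.sqrt (4 * lam + τ ^ 2 * (cKappa a κ) ^ 2) := by
      calc 2 * κ - τ * cKappa a κ ≤ |2 * κ - τ * cKappa a κ| := le_abs_self _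
        _ = Real.sqrt ((2 * κ - τ * cKappa a κ) ^ 2) := (Real.sqrt_sq_eq_abs _).symm
        _ ≤ _ := Real.sqrt_le_sqrt hsq
    unfold lam1
    linarith
  have hset : {κ : ℝ | κ ∈ Set.Ioo 0 (Real.sqrt a) ∧ 0 ≤ lam1 lam τ (cKappa a κ) - κ}
      = Set.Ioo 0 (Real.sqrt a) := by
    ext κ
    exact ⟨fun h => h.1, fun h => ⟨h, key κ h⟩⟩
  have hsqrt : 0 < Real.sqrt a := Real.sqrt_pos.mpr ha
  have h1 : kappaStar a lam τ = Real.sqrt a := by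
    rw [kappaStar, hset, csSup_Ioo hsqrt]
  refine ⟨h1, ?_⟩
  rw [h1, Real.div_sqrt]
  ring
end
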